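/- arXiv:2310.07045 — 2 statements merged into one kernel-verified Lean document; each statement's English description precedes it below -/
import Mathlib

section
/- Under the standing assumptions, let (φ_i)_{i∈ℕ} be any enumeration of all first-order formulas with one distinguished root variable y (φ_i having p_i ≥ 0 further free variables). Then there exists an extending collection of roots: vertices r_n^i ∈ ξ(G_n) and r^i ∈ ξ(L) for all i,n ∈ ℕ such that for all j ≤ i, lim_n ⟨φ_j,(G_n,r_n^i)⟩ = ⟨φ_j,(L,r^i)⟩, and moreover ⟨φ_j,(L,r^i)⟩ = ⟨φ_j,(L,r^{i'})⟩ for all i' ≥ i ≥ j. -/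
open FirstOrder Language MeasureTheory Filter

/-- The set of solutions of a formula `φ` in `p` free variables in a graph. -/
def solSet {V : Type} (G : SimpleGraph V) {p : ℕ}
    (φ : Language.graph.Formula (Fin p)) : Set (Fin p → V) :=
  letI := G.structure
  {v | φ.Realize v}

/-- The set of solutions of a rooted formula `φ(x₁,…,x_p,y)` with the root variable `y`
interpreted as `r`. -/
def solSetR {V : Type} (G : SimpleGraph V) {p : ℕ}
    (φ : Language.graph.Formula (Fin (p + 1))) (r : V) : Set (Fin p → V) :=
  letI := G.structure
  {v | φ.Realize (Fin.snoc v r)}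

/-- The set of solutions of a one-variable formula. -/
def sol1 {V : Type} (G : SimpleGraph V) (ξ : Language.graph.Formula (Fin 1)) : Set V :=
  letI := G.structure
  {v : V | ξ.Realize (fun _ => v)}

/-- Stone pairing `⟨φ,G⟩` of a formula and a finite graph. -/
noncomputable def stoneG {V : Type} (fV : Fintype V) (G : SimpleGraph V) {p : ℕ}
    (φ : Language.graph.Formula (Fin p)) : ℝ :=
  (Nat.card (solSet G φ) : ℝ) / (Fintype.card V : ℝ) ^ p

/-- Rooted Stone pairing `⟨φ,(G,r)⟩` of a rooted formula and a finite graph with root `r`. -/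
noncomputable def stoneGR {V : Type} (fV : Fintype V) (G : SimpleGraph V) {p : ℕ}
    (φ : Language.graph.Formula (Fin (p + 1))) (r : V) : ℝ :=
  (Nat.card (solSetR G φ r) : ℝ) / (Fintype.card V : ℝ) ^ p

/-- Stone pairing `⟨φ,L⟩` of a formula and a modeling. -/
noncomputable def stoneL {W : Type} [MeasurableSpace W] (L : SimpleGraph W)
    (ν : Measure W) {p : ℕ} (φ : Language.graph.Formula (Fin p)) : ℝ :=
  ((Measure.pi fun _ : Fin p => ν) (solSet L φ)).toReal

/-- Rooted Stone pairing `⟨φ,(L,r)⟩` of a rooted formula and a modeling with root `r`. -/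
noncomputable def stoneLR {W : Type} [MeasurableSpace W] (L : SimpleGraph W)
    (ν : Measure W) {p : ℕ} (φ : Language.graph.Formula (Fin (p + 1))) (r : W) : ℝ :=
  ((Measure.pi fun _ : Fin p => ν) (solSetR L φ r)).toReal

/-!
Finite graphs are read as modelings carrying the uniform measure, so every counting identity is
proved once, for measures. Summing over `t = 1, …, |ξ|` the formula "at least `t` roots `y ∈ ξ`
satisfy `Φ(x, y)`" gives a formula whose Stone pairing is `∑_{r ∈ ξ} ⟨Φ, (·, r)⟩`; taking for `Φ` a
conjunction of copies of the `φ_j` on disjoint variables, whose rooted pairing is the product of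
theirs, every power sum over the `ξ`-roots of the vectors `(⟨φ_j, (G_n, r)⟩)_{j ≤ i}` converges to
the corresponding power sum over `ξ(L)`. Finitely many points of `ℝ^d` are determined by their
power sums, so by compactness any fixed root `r ∈ ξ(L)` is a limit of roots `r_n^i ∈ ξ(G_n)`,
and `r^i := r` for all `i`.
-/

open ProbabilityTheory Topology
open scoped ENNReal

section Modelings

variable {W : Type} [MeasurableSpace W]

lemma measurable_fin_snoc {p : ℕ} (r : W) :
    Measurable (fun v : Fin p → W => (Fin.snoc v r : Fin (p + 1) → W)) := by
  rw [measurable_pi_iff]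
  intro i
  induction i using Fin.lastCases with
  | last => simp
  | cast i => simpa using measurable_pi_apply i

lemma measurableSet_solSetR {L : SimpleGraph W}
    (hmeas : ∀ (p : ℕ) (φ : Language.graph.Formula (Fin p)), MeasurableSet (solSet L φ))
    {p : ℕ} (φ : Language.graph.Formula (Fin (p + 1))) (r : W) :
    MeasurableSet (solSetR L φ r) :=
  (hmeas _ φ).preimage (measurable_fin_snoc r)

lemma stoneLR_mem_Icc (L : SimpleGraph W) (ν : Measure W) [IsProbabilityMeasure ν] {p : ℕ}
    (φ : Language.graph.Formula (Fin (p + 1))) (r : W) : stoneLR L ν φ r ∈ Set.Icc 0 1 :=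
  ⟨ENNReal.toReal_nonneg, ENNReal.toReal_le_of_le_ofReal zero_le_one (by simpa using prob_le_one)⟩

lemma measurePreserving_castAdd_natAdd (ν : Measure W) [SigmaFinite ν] (p q : ℕ) :
    MeasurePreserving (fun v : Fin (p + q) → W => (v ∘ Fin.castAdd q, v ∘ Fin.natAdd p))
      (Measure.pi fun _ => ν) ((Measure.pi fun _ => ν).prod (Measure.pi fun _ => ν)) := by
  convert (measurePreserving_sumPiEquivProdPi (X := fun _ : Fin p ⊕ Fin q => W) fun _ => ν).comp
    (measurePreserving_piCongrLeft (fun _ : Fin (p + q) => ν) finSumFinEquiv).symm using 1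
  funext v
  ext i <;> simp [MeasurableEquiv.sumPiEquivProdPi, MeasurableEquiv.piCongrLeft,
    Equiv.sumPiEquivProdPi]

lemma stoneLR_top (L : SimpleGraph W) (ν : Measure W) [IsProbabilityMeasure ν] (r : W) :
    stoneLR L ν (⊤ : Language.graph.Formula (Fin (0 + 1))) r = 1 := by
  let := L.structure
  have : solSetR L (⊤ : Language.graph.Formula (Fin (0 + 1))) r = Set.univ := by
    ext v
    simp [solSetR]
  simp [stoneLR, this]

end Modelings

section UniformMeasure

variable {V : Type} [MeasurableSpace V] [MeasurableSingletonClass V]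

lemma toReal_pi_uniformOn_univ [Fintype V] (p : ℕ) (S : Set (Fin p → V)) :
    (Measure.pi (fun _ : Fin p => uniformOn (Set.univ : Set V)) S).toReal
      = Nat.card S / (Fintype.card V : ℝ) ^ p := by
  rw [← uniformOn_pi, Set.pi_univ, uniformOn_univ,
    Measure.count_apply_finite' (Set.toFinite S) (Set.toFinite S).measurableSet,
    ENNReal.toReal_div, ← Set.ncard_eq_toFinset_card _ (Set.toFinite S), Nat.card_coe_set_eq]
  simp

lemma stoneGR_eq_stoneLR_uniformOn (fV : Fintype V) (G : SimpleGraph V) {p : ℕ}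
    (φ : Language.graph.Formula (Fin (p + 1))) (r : V) :
    stoneGR fV G φ r = stoneLR G (uniformOn Set.univ) φ r :=
  (toReal_pi_uniformOn_univ p _).symm

lemma stoneG_eq_stoneL_uniformOn (fV : Fintype V) (G : SimpleGraph V) {p : ℕ}
    (φ : Language.graph.Formula (Fin p)) :
    stoneG fV G φ = stoneL G (uniformOn Set.univ) φ :=
  (toReal_pi_uniformOn_univ p _).symm

end UniformMeasure

lemma snoc_comp_snoc_castSucc {W : Type} {p q : ℕ} (v : Fin q → W) (r : W) (f : Fin p → Fin q) :
    (Fin.snoc v r : Fin (q + 1) → W) ∘ Fin.snoc (fun i => (f i).castSucc) (Fin.last q)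
      = Fin.snoc (v ∘ f) r := by
  rw [Fin.comp_snoc, Fin.snoc_last]
  congr 1
  funext i
  simp

/-- Rooted formulas `φ(x₁,…,x_p,y)`; the root `y` is the last variable. -/
abbrev RootedFormula : Type := (p : ℕ) × Language.graph.Formula (Fin (p + 1))

namespace RootedFormula

/-- `φ(x, y) ∧ ψ(x', y)` with disjoint tuples `x`, `x'` and a shared root `y`. -/
def conj (φ ψ : RootedFormula) : RootedFormula :=
  ⟨φ.1 + ψ.1,
    φ.2.relabel (Fin.snoc (fun i => (Fin.castAdd ψ.1 i).castSucc) (Fin.last _)) ⊓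
    ψ.2.relabel (Fin.snoc (fun i => (Fin.natAdd φ.1 i).castSucc) (Fin.last _))⟩

def conjList (l : List RootedFormula) : RootedFormula := l.foldr conj ⟨0, ⊤⟩

noncomputable def monomial {ι : Type} [Fintype ι] (φ : ι → RootedFormula) (m : ι → ℕ) :
    RootedFormula :=
  conjList (Finset.univ.toList.flatMap fun j => List.replicate (m j) (φ j))

variable {W : Type}

lemma solSetR_conj (L : SimpleGraph W) (φ ψ : RootedFormula) (r : W) :
    solSetR L (conj φ ψ).2 r
      = (fun v : Fin (φ.1 + ψ.1) → W => (v ∘ Fin.castAdd ψ.1, v ∘ Fin.natAdd φ.1)) ⁻¹'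
          (solSetR L φ.2 r ×ˢ solSetR L ψ.2 r) := by
  let := L.structure
  ext v
  simp only [solSetR, conj, Formula.realize_inf, Formula.realize_relabel, snoc_comp_snoc_castSucc]
  exact Iff.rfl

variable [MeasurableSpace W] (L : SimpleGraph W) (ν : Measure W)
  (hmeas : ∀ (p : ℕ) (φ : Language.graph.Formula (Fin p)), MeasurableSet (solSet L φ))
include hmeas

lemma stoneLR_conj [SigmaFinite ν] (φ ψ : RootedFormula) (r : W) :
    stoneLR L ν (conj φ ψ).2 r = stoneLR L ν φ.2 r * stoneLR L ν ψ.2 r := by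
  have h := (measurePreserving_castAdd_natAdd ν φ.1 ψ.1).measure_preimage
    ((measurableSet_solSetR hmeas φ.2 r).prod (measurableSet_solSetR hmeas ψ.2 r)).nullMeasurableSet
  rw [Measure.prod_prod, ← solSetR_conj] at h
  rw [stoneLR, stoneLR, stoneLR, ← ENNReal.toReal_mul, ← h]
  rfl

variable [IsProbabilityMeasure ν]

lemma stoneLR_conjList (l : List RootedFormula) (r : W) :
    stoneLR L ν (conjList l).2 r = (l.map fun φ => stoneLR L ν φ.2 r).prod := by
  induction l with
  | nil => exact stoneLR_top L ν r
  | cons φ l ih =>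
    rw [List.map_cons, List.prod_cons, ← ih, conjList, List.foldr_cons, stoneLR_conj L ν hmeas]
    rfl

lemma stoneLR_monomial {ι : Type} [Fintype ι] (φ : ι → RootedFormula) (m : ι → ℕ) (r : W) :
    stoneLR L ν (monomial φ m).2 r = ∏ j, stoneLR L ν (φ j).2 r ^ m j := by
  simp [monomial, stoneLR_conjList L ν hmeas, List.flatMap, List.prod_flatten,
    List.prod_replicate]

end RootedFormula

/-- `∃ y₁ … yₜ` pairwise distinct with `⋀ₛ (ξ(yₛ) ∧ Φ(x, yₛ))`. -/
noncomputable def atLeastRoots (ξ : Language.graph.Formula (Fin 1)) {p : ℕ}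
    (Φ : Language.graph.Formula (Fin (p + 1))) (t : ℕ) : Language.graph.Formula (Fin p) :=
  (BoundedFormula.iInf (fun st : {st : Fin t × Fin t // st.1 ≠ st.2} =>
      ∼((&st.1.1).bdEqual (&st.1.2))) ⊓
    BoundedFormula.iInf fun s : Fin t =>
      BoundedFormula.relabel (fun _ => Sum.inr s) ξ ⊓
        BoundedFormula.relabel (Fin.snoc Sum.inl (Sum.inr s)) Φ).exs

section AtLeastRoots

variable {V : Type} (G : SimpleGraph V) (ξ : Language.graph.Formula (Fin 1)) {p : ℕ}
  (Φ : Language.graph.Formula (Fin (p + 1)))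

lemma mem_solSet_atLeastRoots (t : ℕ) (v : Fin p → V) :
    v ∈ solSet G (atLeastRoots ξ Φ t) ↔ ∃ xs : Fin t → V, Function.Injective xs ∧
      ∀ s, xs s ∈ sol1 G ξ ∧ v ∈ solSetR G Φ (xs s) := by
  let := G.structure
  change (atLeastRoots ξ Φ t).Realize v ↔ _
  rw [atLeastRoots, BoundedFormula.realize_exs]
  simp only [BoundedFormula.realize_inf, BoundedFormula.realize_iInf,
    BoundedFormula.realize_relabel]
  refine exists_congr fun xs => and_congr ?_ (forall_congr' fun s => and_congr ?_ ?_)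
  · simp only [BoundedFormula.realize_not, BoundedFormula.realize_bdEqual, Function.comp_apply,
      Term.realize_var, Sum.elim_inr, Subtype.forall, Prod.forall]
    exact ⟨fun h a b hab => by_contra fun hne => h a b hne hab, fun h a b hne hab => hne (h hab)⟩
  · rw [Subsingleton.elim (α := Fin 0 → V) (xs ∘ Fin.natAdd t) default]
    rfl
  · rw [Subsingleton.elim (α := Fin 0 → V) (xs ∘ Fin.natAdd t) default, Fin.comp_snoc]
    simp only [Sum.elim_comp_inl, Function.comp_apply, Sum.elim_inr, Fin.castAdd_zero,
      Fin.cast_eq_self]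
    rfl

open scoped Classical in
lemma mem_solSet_atLeastRoots_iff {κ : Type} [Fintype κ] (root : κ ≃ sol1 G ξ) (t : ℕ)
    (v : Fin p → V) :
    v ∈ solSet G (atLeastRoots ξ Φ t) ↔
      t ≤ (Finset.univ.filter fun s => v ∈ solSetR G Φ (root s)).card := by
  rw [mem_solSet_atLeastRoots, ← Fintype.card_subtype, ← Fintype.card_fin t,
    ← Function.Embedding.nonempty_iff_card_le, Fintype.card_fin]
  constructor
  · rintro ⟨xs, hinj, hxs⟩
    refine ⟨⟨fun s => ⟨root.symm ⟨xs s, (hxs s).1⟩, by simpa using (hxs s).2⟩, fun a b hab => ?_⟩⟩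
    exact hinj (by simpa using congrArg (fun x => (root x : V)) (congrArg Subtype.val hab))
  · rintro ⟨emb⟩
    exact ⟨fun s => root (emb s), fun a b hab => emb.injective (Subtype.ext (root.injective
      (Subtype.ext hab))), fun s => ⟨(root (emb s)).2, (emb s).2⟩⟩

end AtLeastRoots

open scoped Classical in
lemma sum_measure_eq_lintegral_card_filter_mem {X ι : Type*} [MeasurableSpace X]
    (μ : Measure X) {s : Finset ι} {A : ι → Set X} (hA : ∀ i ∈ s, MeasurableSet (A i)) :
    ∑ i ∈ s, μ (A i) = ∫⁻ x, ((s.filter fun i => x ∈ A i).card : ℝ≥0∞) ∂μ := by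
  have hcard (x : X) :
      ((s.filter fun i => x ∈ A i).card : ℝ≥0∞) = ∑ i ∈ s, (A i).indicator 1 x := by
    simp [Set.indicator_apply, Finset.sum_boole]
  simp_rw [hcard]
  rw [lintegral_finsetSum' _ fun i hi => (measurable_one.indicator (hA i hi)).aemeasurable]
  exact Finset.sum_congr rfl fun i hi => (lintegral_indicator_one (hA i hi)).symm

open scoped Classical in
lemma sum_measure_eq_of_card_filter_mem_eq {X ι κ : Type*} [MeasurableSpace X] (μ : Measure X)
    {s : Finset ι} {t : Finset κ} {A : ι → Set X} {B : κ → Set X}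
    (hA : ∀ i ∈ s, MeasurableSet (A i)) (hB : ∀ j ∈ t, MeasurableSet (B j))
    (h : ∀ x, (s.filter fun i => x ∈ A i).card = (t.filter fun j => x ∈ B j).card) :
    ∑ i ∈ s, μ (A i) = ∑ j ∈ t, μ (B j) := by
  simp_rw [sum_measure_eq_lintegral_card_filter_mem μ hA,
    sum_measure_eq_lintegral_card_filter_mem μ hB, h]

section Counting

open scoped Classical

variable {W : Type} [MeasurableSpace W] (L : SimpleGraph W) (ν : Measure W) [IsFiniteMeasure ν]
  (hmeas : ∀ (p : ℕ) (φ : Language.graph.Formula (Fin p)), MeasurableSet (solSet L φ))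
  (ξ : Language.graph.Formula (Fin 1)) {κ : Type} [Fintype κ] (root : κ ≃ sol1 L ξ)
include hmeas

lemma sum_stoneL_atLeastRoots {p : ℕ} (Φ : Language.graph.Formula (Fin (p + 1))) :
    ∑ t ∈ Finset.Icc 1 (Fintype.card κ), stoneL L ν (atLeastRoots ξ Φ t)
      = ∑ s, stoneLR L ν Φ (root s) := by
  have hcard : ∀ v, ((Finset.Icc 1 (Fintype.card κ)).filter
      fun t => v ∈ solSet L (atLeastRoots ξ Φ t)).card
        = (Finset.univ.filter fun s => v ∈ solSetR L Φ (root s)).card := by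
    intro v
    simp_rw [mem_solSet_atLeastRoots_iff L ξ Φ root]
    set c := (Finset.univ.filter fun s => v ∈ solSetR L Φ (root s)).card
    have hc : c ≤ Fintype.card κ := Finset.card_le_univ _
    rw [show (Finset.Icc 1 (Fintype.card κ)).filter (· ≤ c) = Finset.Icc 1 c by
      ext; simp only [Finset.mem_filter, Finset.mem_Icc]; omega, Nat.card_Icc, Nat.add_sub_cancel]
  simp only [stoneL, stoneLR]
  rw [← ENNReal.toReal_sum (fun _ _ => measure_ne_top _ _),
    ← ENNReal.toReal_sum (fun _ _ => measure_ne_top _ _),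
    sum_measure_eq_of_card_filter_mem_eq _ (fun _ _ => hmeas _ _)
      (fun _ _ => measurableSet_solSetR hmeas _ _) hcard]

end Counting

section Moments

variable {κ ι : Type*} [Fintype κ] [Fintype ι]

open MvPolynomial in
lemma sum_eval_eq_of_sum_prod_pow_eq {f g : κ → ι → ℝ}
    (h : ∀ m : ι → ℕ, ∑ s, ∏ j, f s j ^ m j = ∑ s, ∏ j, g s j ^ m j) (P : MvPolynomial ι ℝ) :
    ∑ s, eval (f s) P = ∑ s, eval (g s) P := by
  simp only [eval_eq']
  rw [Finset.sum_comm, Finset.sum_comm (s := Finset.univ)]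
  exact Finset.sum_congr rfl fun m _ => by rw [← Finset.mul_sum, ← Finset.mul_sum, h]

open MvPolynomial in
lemma exists_eq_of_sum_prod_pow_eq {f g : κ → ι → ℝ}
    (h : ∀ m : ι → ℕ, ∑ s, ∏ j, f s j ^ m j = ∑ s, ∏ j, g s j ^ m j) (s₀ : κ) :
    ∃ s, f s = g s₀ := by
  classical
  by_contra! hne
  -- `P` is a sum-of-squares polynomial vanishing exactly on the points `f s`.
  let P : MvPolynomial ι ℝ := ∏ z ∈ Finset.univ.image f, ∑ j, (X j - C (z j)) ^ 2
  have hP : ∀ x, eval x P = ∏ z ∈ Finset.univ.image f, ∑ j, (x j - z j) ^ 2 := by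
    simp [P]
  have hPf : ∀ s, eval (f s) P = 0 := fun s => by
    rw [hP]
    exact Finset.prod_eq_zero (Finset.mem_image_of_mem f (Finset.mem_univ s)) (by simp)
  have hPg : ∀ s, 0 ≤ eval (g s) P := fun s => by
    rw [hP]
    exact Finset.prod_nonneg fun z _ => Finset.sum_nonneg fun j _ => sq_nonneg _
  have hPg₀ : 0 < eval (g s₀) P := by
    rw [hP]
    refine Finset.prod_pos fun z hz => ?_
    obtain ⟨s, -, rfl⟩ := Finset.mem_image.1 hz
    obtain ⟨j, hj⟩ := Function.ne_iff.1 (hne s)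
    exact Finset.sum_pos' (fun j _ => sq_nonneg _)
      ⟨j, Finset.mem_univ j, by have := sub_ne_zero.2 (Ne.symm hj); positivity⟩
  have := sum_eval_eq_of_sum_prod_pow_eq h P
  rw [Finset.sum_eq_zero fun s _ => hPf s] at this
  exact (lt_of_lt_of_le hPg₀ (Finset.single_le_sum (fun s _ => hPg s) (Finset.mem_univ s₀))).ne
    this

lemma continuous_sum_prod_pow (m : ι → ℕ) :
    Continuous fun x : κ → ι → ℝ => ∑ s, ∏ j, x s j ^ m j := by
  fun_prop

lemma exists_tendsto_of_tendsto_sum_prod_pow {K : Set (ι → ℝ)} (hK : IsCompact K)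
    {a : ℕ → κ → ι → ℝ} {b : κ → ι → ℝ} (ha : ∀ n s, a n s ∈ K)
    (hmom : ∀ m : ι → ℕ,
      Tendsto (fun n => ∑ s, ∏ j, a n s j ^ m j) atTop (𝓝 (∑ s, ∏ j, b s j ^ m j)))
    (s₀ : κ) : ∃ sel : ℕ → κ, Tendsto (fun n => a n (sel n)) atTop (𝓝 (b s₀)) := by
  have : Nonempty κ := ⟨s₀⟩
  choose sel hsel using fun n => Finite.exists_min fun s => dist (a n s) (b s₀)
  refine ⟨sel, tendsto_iff_dist_tendsto_zero.2 (tendsto_of_subseq_tendsto fun ns hns => ?_)⟩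
  obtain ⟨c, -, ms, hms, hc⟩ := (isCompact_univ_pi fun _ : κ => hK).tendsto_subseq
    (x := fun n => a (ns n)) fun n => Set.mem_univ_pi.2 (ha _)
  have hmomc : ∀ m : ι → ℕ, ∑ s, ∏ j, c s j ^ m j = ∑ s, ∏ j, b s j ^ m j := fun m =>
    tendsto_nhds_unique (((continuous_sum_prod_pow m).tendsto c).comp hc)
      ((hmom m).comp (hns.comp hms.tendsto_atTop))
  obtain ⟨s, hs⟩ := exists_eq_of_sum_prod_pow_eq hmomc s₀
  refine ⟨ms, squeeze_zero (fun _ => dist_nonneg) (fun n => hsel _ s) ?_⟩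
  simpa [hs] using (((continuous_apply s).tendsto c).comp hc).dist (tendsto_const_nhds (x := b s₀))

end Moments

section FiniteGraphs

variable {V : Type} (fV : Fintype V) (G : SimpleGraph V)

lemma stoneGR_mem_Icc {p : ℕ} (φ : Language.graph.Formula (Fin (p + 1))) (r : V) :
    stoneGR fV G φ r ∈ Set.Icc 0 1 := by
  let : MeasurableSpace V := ⊤
  have : DiscreteMeasurableSpace V := ⟨fun _ => trivial⟩
  have : Nonempty V := ⟨r⟩
  rw [stoneGR_eq_stoneLR_uniformOn]
  exact stoneLR_mem_Icc G _ φ r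

lemma stoneGR_monomial {ι : Type} [Fintype ι] (φ : ι → RootedFormula) (m : ι → ℕ) (r : V) :
    stoneGR fV G (RootedFormula.monomial φ m).2 r = ∏ j, stoneGR fV G (φ j).2 r ^ m j := by
  let : MeasurableSpace V := ⊤
  have : DiscreteMeasurableSpace V := ⟨fun _ => trivial⟩
  have : Nonempty V := ⟨r⟩
  simp only [stoneGR_eq_stoneLR_uniformOn]
  exact RootedFormula.stoneLR_monomial G _ (fun _ _ => (Set.toFinite _).measurableSet) φ m r

lemma sum_stoneG_atLeastRoots (ξ : Language.graph.Formula (Fin 1)) {κ : Type} [Fintype κ]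
    (root : κ ≃ sol1 G ξ) {p : ℕ} (Φ : Language.graph.Formula (Fin (p + 1))) :
    ∑ t ∈ Finset.Icc 1 (Fintype.card κ), stoneG fV G (atLeastRoots ξ Φ t)
      = ∑ s, stoneGR fV G Φ (root s) := by
  let : MeasurableSpace V := ⊤
  have : DiscreteMeasurableSpace V := ⟨fun _ => trivial⟩
  simp only [stoneG_eq_stoneL_uniformOn, stoneGR_eq_stoneLR_uniformOn]
  exact sum_stoneL_atLeastRoots G _ (fun _ _ => (Set.toFinite _).measurableSet) ξ root Φ

end FiniteGraphs

lemma tendsto_sum_prod_pow_stoneGR {V : ℕ → Type} (fV : ∀ n, Fintype (V n))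
    (G : ∀ n, SimpleGraph (V n)) {W : Type} [MeasurableSpace W] {L : SimpleGraph W}
    {ν : Measure W} [IsProbabilityMeasure ν]
    (hmeas : ∀ (p : ℕ) (φ : Language.graph.Formula (Fin p)), MeasurableSet (solSet L φ))
    (hlim : ∀ (p : ℕ) (φ : Language.graph.Formula (Fin p)),
      Tendsto (fun n => stoneG (fV n) (G n) φ) atTop (𝓝 (stoneL L ν φ)))
    {ξ : Language.graph.Formula (Fin 1)} {κ ι : Type} [Fintype κ] [Fintype ι]
    (rootG : ∀ n, κ ≃ sol1 (G n) ξ) (rootL : κ ≃ sol1 L ξ) (φ : ι → RootedFormula)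
    (m : ι → ℕ) :
    Tendsto (fun n => ∑ s, ∏ j, stoneGR (fV n) (G n) (φ j).2 (rootG n s) ^ m j) atTop
      (𝓝 (∑ s, ∏ j, stoneLR L ν (φ j).2 (rootL s) ^ m j)) := by
  simp_rw [← stoneGR_monomial, ← RootedFormula.stoneLR_monomial L ν hmeas,
    ← sum_stoneG_atLeastRoots, ← sum_stoneL_atLeastRoots L ν hmeas ξ rootL]
  exact tendsto_finsetSum _ fun t _ => hlim _ _

theorem collection_of_extending_rootings_general

    (V : ℕ → Type) (fV : ∀ n, Fintype (V n))
    (G : ∀ n, SimpleGraph (V n))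
    (W : Type) [MeasurableSpace W]
    (L : SimpleGraph W) (ν : Measure W) [IsProbabilityMeasure ν]
    (hmeas : ∀ (p : ℕ) (φ : Language.graph.Formula (Fin p)), MeasurableSet (solSet L φ))
    (hlim : ∀ (p : ℕ) (φ : Language.graph.Formula (Fin p)),
      Tendsto (fun n => stoneG (fV n) (G n) φ) atTop (nhds (stoneL L ν φ)))
    (ξ : Language.graph.Formula (Fin 1))
    (hfin : (sol1 L ξ).Finite) (hnonempty : (sol1 L ξ).Nonempty)
    (hcard : ∀ n, Nat.card (sol1 (G n) ξ) = Nat.card (sol1 L ξ))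
    (e : ℕ → (p : ℕ) × Language.graph.Formula (Fin (p + 1))) :
    ∃ (rr : ℕ → (n : ℕ) → V n) (r : ℕ → W),
      (∀ i n, rr i n ∈ sol1 (G n) ξ) ∧ (∀ i, r i ∈ sol1 L ξ) ∧
      ∀ i j, j ≤ i →
        (Tendsto (fun n => stoneGR (fV n) (G n) (e j).2 (rr i n)) atTop
            (nhds (stoneLR L ν (e j).2 (r i)))) ∧
        (∀ i', i ≤ i' → stoneLR L ν (e j).2 (r i) = stoneLR L ν (e j).2 (r i')) := by
  have : Finite (sol1 L ξ) := hfin.to_subtype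
  have : Nonempty (sol1 L ξ) := hnonempty.to_subtype
  let rootL : Fin (Nat.card (sol1 L ξ)) ≃ sol1 L ξ := (Finite.equivFin _).symm
  let rootG n : Fin (Nat.card (sol1 L ξ)) ≃ sol1 (G n) ξ :=
    have := fV n
    (finCongr (hcard n)).symm.trans (Finite.equivFin _).symm
  let s₀ := rootL.symm (Classical.arbitrary _)
  have hsel (i : ℕ) : ∃ sel : ℕ → Fin (Nat.card (sol1 L ξ)),
      Tendsto (fun n (j : Fin (i + 1)) => stoneGR (fV n) (G n) (e j).2 (rootG n (sel n))) atTop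
        (𝓝 fun j => stoneLR L ν (e j).2 (rootL s₀)) :=
    exists_tendsto_of_tendsto_sum_prod_pow isCompact_Icc
      (fun _ _ => ⟨fun _ => (stoneGR_mem_Icc _ _ _ _).1, fun _ => (stoneGR_mem_Icc _ _ _ _).2⟩)
      (tendsto_sum_prod_pow_stoneGR fV G hmeas hlim rootG rootL _) s₀
  choose sel hsel using hsel
  refine ⟨fun i n => rootG n (sel i n), fun _ => rootL s₀, fun i n => (rootG n _).2,
    fun _ => (rootL s₀).2, fun i j hj => ⟨?_, fun _ _ => rfl⟩⟩
  exact tendsto_pi_nhds.1 (hsel i) ⟨j, Nat.lt_succ_of_le hj⟩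

/-- Lemma: existence of an extending collection of roots. Here `e` is an
enumeration of all rooted first-order formulas (a formula `φᵢ` has `pᵢ` free variables plus
the distinguished root variable, encoded as the last variable). -/
theorem collection_of_extending_rootings

    (V : ℕ → Type) (fV : ∀ n, Fintype (V n)) (hVne : ∀ n, Nonempty (V n))
    (G : ∀ n, SimpleGraph (V n))
    (W : Type) [MeasurableSpace W] [StandardBorelSpace W]
    (L : SimpleGraph W) (ν : Measure W) [IsProbabilityMeasure ν]
    (hmeas : ∀ (p : ℕ) (φ : Language.graph.Formula (Fin p)), MeasurableSet (solSet L φ))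
    (hFOconv : ∀ (p : ℕ) (φ : Language.graph.Formula (Fin p)),
      ∃ c : ℝ, Tendsto (fun n => stoneG (fV n) (G n) φ) atTop (nhds c))
    (hlim : ∀ (p : ℕ) (φ : Language.graph.Formula (Fin p)),
      Tendsto (fun n => stoneG (fV n) (G n) φ) atTop (nhds (stoneL L ν φ)))
    (ξ : Language.graph.Formula (Fin 1))
    (hfin : (sol1 L ξ).Finite) (hnonempty : (sol1 L ξ).Nonempty)
    (hmin : ∀ ψ : Language.graph.Formula (Fin 1),
      sol1 L ψ ⊆ sol1 L ξ → sol1 L ψ = ∅ ∨ sol1 L ψ = sol1 L ξ)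
    (hcard : ∀ n, Nat.card (sol1 (G n) ξ) = Nat.card (sol1 L ξ))
    (e : ℕ → (p : ℕ) × Language.graph.Formula (Fin (p + 1)))
    (henum : Function.Surjective e) :
    ∃ (rr : ℕ → (n : ℕ) → V n) (r : ℕ → W),
      (∀ i n, rr i n ∈ sol1 (G n) ξ) ∧ (∀ i, r i ∈ sol1 L ξ) ∧
      ∀ i j, j ≤ i →
        (Tendsto (fun n => stoneGR (fV n) (G n) (e j).2 (rr i n)) atTop
            (nhds (stoneLR L ν (e j).2 (r i)))) ∧
        (∀ i', i ≤ i' → stoneLR L ν (e j).2 (r i) = stoneLR L ν (e j).2 (r i')) :=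
  collection_of_extending_rootings_general V fV G W L ν hmeas hlim ξ hfin hnonempty hcard e
end

section
/- Let M be a finite set with m elements and μ a probability distribution on the power set of M. For every ε > 0 there exists δ > 0 such that for every probability distribution μ' on the power set of M satisfying |Pr_μ[F_ℓ^k] − Pr_{μ'}[F_ℓ^k]| < δ for all ℓ ∈ {0,1,…,m} and all k ∈ {1,…,binom(m,ℓ)}, the following holds: for every ℓ ∈ {0,1,…,m} there is a bijection σ_ℓ of the ℓ-element subsets of M such that |μ(X^↑) − μ'(σ_ℓ(X)^↑)| < ε for every ℓ-element subset X of M. -/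
open Finset

/-- `μ(X^↑)`: the mass that the distribution `μ` on the power set of `M` gives to the
filter generated by `X`, i.e. `∑_{Y ⊇ X} μ({Y})`. -/
def filterMass {M : Type} [Fintype M] [DecidableEq M] (μ : Finset M → ℝ) (X : Finset M) : ℝ :=
  ∑ Y ∈ Finset.univ.filter (fun Y => X ⊆ Y), μ Y

/-- `Pr_μ[F_ℓ^k]`: the probability that `k` independent `μ`-random subsets of `M`
have intersection of size at least `ℓ`. -/
def prF {M : Type} [Fintype M] [DecidableEq M] (μ : Finset M → ℝ) (ℓ k : ℕ) : ℝ :=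
  ∑ X : Fin k → Finset M,
    if ℓ ≤ (Finset.univ.inf X).card then ∏ i, μ (X i) else 0

/-!
Counting the `ℓ`-subsets of the intersection of `k` independent `μ`-random sets gives
`∑_{|X| = ℓ} μ(X^↑)^k = Pr_μ[F_ℓ^k] + ∑_{j > ℓ} c_{ℓ j} Pr_μ[F_j^k]` with coefficients independent
of `μ`. By downward induction on `ℓ`, the values `Pr[F_ℓ^k]`, `k ≤ binom(m, ℓ)`, thus determine the
first `binom(m, ℓ)` power sums of the multiset `{μ(X^↑) : |X| = ℓ}` of `binom(m, ℓ)` reals, hence by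
Newton's identities the multiset itself, and with it `Pr[F_ℓ^k]` for every `k`.
Continuity then comes from compactness of the simplex: the set of `μ'` admitting bijections with
error `< ε` is open and contains every `μ'` with exactly the same probabilities as `μ`.
-/

theorem exists_equiv_apply_eq_of_map_univ_eq {ι α : Type*} [Fintype ι] {f g : ι → α}
    (h : univ.val.map f = univ.val.map g) : ∃ σ : ι ≃ ι, ∀ i, g (σ i) = f i := by
  classical
  have hfiber (a : α) : Fintype.card {i // f i = a} = Fintype.card {i // g i = a} := by
    have := congrArg (Multiset.count a) h
    simp only [Multiset.count_map] at this
    simpa [Fintype.card_subtype, Finset.card, Finset.filter_val, eq_comm] using this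
  exact ⟨Equiv.ofFiberEquiv fun a => Fintype.equivOfCardEq (hfiber a),
    Equiv.ofFiberEquiv_map _⟩

namespace MvPolynomial

theorem aeval_esymm_eq_of_aeval_psum_eq {σ K : Type*} [Fintype σ] [CommRing K] [IsDomain K]
    [CharZero K] {f g : σ → K} {n : ℕ}
    (h : ∀ k ∈ Icc 1 n, aeval f (psum σ K k) = aeval g (psum σ K k)) :
    ∀ j ≤ n, aeval f (esymm σ K j) = aeval g (esymm σ K j) := by
  intro j
  induction j using Nat.strong_induction_on with
  | _ j ih =>
    intro hj
    rcases j.eq_zero_or_pos with rfl | hj0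
    · simp
    have hnewton (x : σ → K) := congrArg (aeval x) (mul_esymm_eq_sum σ K j)
    simp only [map_mul, map_sum, map_pow, map_neg, map_one, map_natCast] at hnewton
    refine mul_left_cancel₀ (Nat.cast_ne_zero.2 hj0.ne' : (j : K) ≠ 0) ?_
    rw [hnewton f, hnewton g]
    congr 1
    refine sum_congr rfl fun a ha => ?_
    rw [mem_filter, HasAntidiagonal.mem_antidiagonal] at ha
    rw [ih a.1 ha.2 (by omega), h a.2 (mem_Icc.2 ⟨by omega, by omega⟩)]

end MvPolynomial

theorem exists_equiv_apply_eq_of_sum_pow_eq {ι K : Type*} [Fintype ι] [CommRing K] [IsDomain K]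
    [CharZero K] {f g : ι → K}
    (h : ∀ k ∈ Icc 1 (Fintype.card ι), ∑ i, f i ^ k = ∑ i, g i ^ k) :
    ∃ σ : ι ≃ ι, ∀ i, g (σ i) = f i := by
  have hesymm := MvPolynomial.aeval_esymm_eq_of_aeval_psum_eq (f := f) (g := g)
    fun k hk => by simpa [MvPolynomial.psum] using h k hk
  simp only [MvPolynomial.aeval_esymm_eq_multiset_esymm] at hesymm
  refine exists_equiv_apply_eq_of_map_univ_eq ?_
  classical
  rw [← Polynomial.roots_multiset_prod_X_sub_C (univ.val.map f),
    ← Polynomial.roots_multiset_prod_X_sub_C (univ.val.map g),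
    Multiset.prod_X_sub_X_eq_sum_esymm, Multiset.prod_X_sub_X_eq_sum_esymm]
  simp only [Multiset.card_map, card_val, card_univ]
  refine congrArg _ (sum_congr rfl fun j hj => ?_)
  rw [hesymm j (by simpa [Nat.lt_succ_iff] using hj)]

theorem Nat.cast_choose_eq_ite_add_sum_Ico {R : Type*} [Ring R] {ℓ n N : ℕ} (hn : n ≤ N) :
    (n.choose ℓ : R) = (if ℓ ≤ n then 1 else 0) +
      ∑ i ∈ Ico ℓ N, ((i + 1).choose ℓ - i.choose ℓ : R) * (if i + 1 ≤ n then 1 else 0) := by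
  rcases lt_or_ge n ℓ with hnℓ | hℓn
  · rw [Nat.choose_eq_zero_of_lt hnℓ, if_neg (by omega), Nat.cast_zero, zero_add]
    refine (sum_eq_zero fun i hi => ?_).symm
    rw [mem_Ico] at hi
    rw [if_neg (by omega), mul_zero]
  · have hfilter : {i ∈ Ico ℓ N | i + 1 ≤ n} = Ico ℓ n := by
      ext i
      simp only [mem_filter, mem_Ico]
      omega
    simp only [mul_ite, mul_one, mul_zero]
    rw [if_pos hℓn, ← sum_filter, hfilter, sum_Ico_sub (fun i => (i.choose ℓ : R)) hℓn,
      Nat.choose_self, Nat.cast_one, add_sub_cancel]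

theorem IsCompact.exists_pos_forall_mem_of_dist_lt {X Y : Type*} [TopologicalSpace X]
    [MetricSpace Y] {K U : Set X} (hK : IsCompact K) (hU : IsOpen U) {F : X → Y}
    (hF : Continuous F) {y : Y} (h : ∀ x ∈ K, F x = y → x ∈ U) :
    ∃ δ > 0, ∀ x ∈ K, dist (F x) y < δ → x ∈ U := by
  have hy : y ∉ F '' (K \ U) := by
    rintro ⟨x, ⟨hxK, hxU⟩, rfl⟩
    exact hxU (h x hxK rfl)
  obtain ⟨δ, hδ, hball⟩ :=
    Metric.isOpen_iff.1 ((hK.diff hU).image hF).isClosed.isOpen_compl y hy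
  exact ⟨δ, hδ, fun x hxK hxy => by_contra fun hxU =>
    hball (Metric.mem_ball.2 hxy) ⟨x, ⟨hxK, hxU⟩, rfl⟩⟩

theorem IsCompact.exists_pos_forall_mem_of_abs_sub_lt {ι X : Type*} [TopologicalSpace X]
    {K U : Set X} (hK : IsCompact K) (hU : IsOpen U) {S : Set ι} (hS : S.Finite)
    {F : ι → X → ℝ} (hF : ∀ i, Continuous (F i)) (x₀ : X)
    (h : ∀ x ∈ K, (∀ i ∈ S, F i x₀ = F i x) → x ∈ U) :
    ∃ δ > 0, ∀ x ∈ K, (∀ i ∈ S, |F i x₀ - F i x| < δ) → x ∈ U := by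
  have := hS.fintype
  obtain ⟨δ, hδ, hU'⟩ := hK.exists_pos_forall_mem_of_dist_lt hU
    (F := fun x (i : S) => F i x) (y := fun i => F i x₀) (continuous_pi fun i => hF i)
    fun x hxK hx => h x hxK fun i hi => (congrFun hx ⟨i, hi⟩).symm
  refine ⟨δ, hδ, fun x hxK hx => hU' x hxK ((dist_pi_lt_iff hδ).2 fun i => ?_)⟩
  rw [Real.dist_eq, abs_sub_comm]
  exact hx i i.2

section

variable {M : Type} [Fintype M] [DecidableEq M]

theorem filterMass_pow (μ : Finset M → ℝ) (X : Finset M) (k : ℕ) :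
    filterMass μ X ^ k = ∑ Y : Fin k → Finset M, if ∀ i, X ⊆ Y i then ∏ i, μ (Y i) else 0 := by
  rw [filterMass, sum_filter, Fintype.sum_pow]
  simp only [prod_ite_zero, mem_univ, true_imp_iff]

theorem sum_filterMass_pow (μ : Finset M → ℝ) (ℓ k : ℕ) :
    ∑ X : {X : Finset M // X.card = ℓ}, filterMass μ X.1 ^ k =
      ∑ Y : Fin k → Finset M, ((univ.inf Y).card.choose ℓ : ℝ) * ∏ i, μ (Y i) := by
  rw [← sum_subtype _ (fun X => mem_powersetCard_univ) (fun X => filterMass μ X ^ k)]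
  simp only [filterMass_pow]
  rw [sum_comm]
  refine sum_congr rfl fun Y _ => ?_
  have hsub (X : Finset M) : (∀ i, X ⊆ Y i) ↔ X ⊆ univ.inf Y := by
    rw [Finset.le_inf_iff]
    simp
  simp only [hsub]
  rw [← sum_filter, sum_const, nsmul_eq_mul]
  congr 2
  rw [← card_powersetCard]
  congr 1
  ext X
  simp [mem_powersetCard, and_comm]

theorem sum_choose_mul_prod_eq_prF_add_sum (μ : Finset M → ℝ) (ℓ k : ℕ) :
    ∑ Y : Fin k → Finset M, ((univ.inf Y).card.choose ℓ : ℝ) * ∏ i, μ (Y i) =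
      prF μ ℓ k + ∑ i ∈ Ico ℓ (Fintype.card M),
        ((i + 1).choose ℓ - i.choose ℓ : ℝ) * prF μ (i + 1) k := by
  have hpoint (Y : Fin k → Finset M) :
      ((univ.inf Y).card.choose ℓ : ℝ) * ∏ i, μ (Y i) =
        (if ℓ ≤ (univ.inf Y).card then ∏ i, μ (Y i) else 0) +
          ∑ i ∈ Ico ℓ (Fintype.card M), ((i + 1).choose ℓ - i.choose ℓ : ℝ) *
            (if i + 1 ≤ (univ.inf Y).card then ∏ i, μ (Y i) else 0) := by
    rw [Nat.cast_choose_eq_ite_add_sum_Ico (card_le_univ _), add_mul, sum_mul]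
    simp only [ite_mul, one_mul, zero_mul, mul_ite, mul_zero, mul_assoc]
  simp only [prF, hpoint, sum_add_distrib, mul_sum]
  rw [sum_comm]

theorem exists_equiv_filterMass_eq_of_prF_eq_ge {μ ν : Finset M → ℝ} {ℓ : ℕ}
    (hℓ : ∀ k, 1 ≤ k → k ≤ (Fintype.card M).choose ℓ → prF μ ℓ k = prF ν ℓ k)
    (habove : ∀ j, ℓ < j → j ≤ Fintype.card M → ∀ k, 1 ≤ k → prF μ j k = prF ν j k) :
    ∃ σ : {X : Finset M // X.card = ℓ} ≃ {X : Finset M // X.card = ℓ},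
      ∀ X, filterMass ν (σ X).1 = filterMass μ X.1 := by
  refine exists_equiv_apply_eq_of_sum_pow_eq (K := ℝ)
    (f := fun X : {X : Finset M // X.card = ℓ} => filterMass μ X.1)
    (g := fun X => filterMass ν X.1) fun k hk => ?_
  rw [Fintype.card_finset_len, mem_Icc] at hk
  rw [sum_filterMass_pow, sum_filterMass_pow, sum_choose_mul_prod_eq_prF_add_sum,
    sum_choose_mul_prod_eq_prF_add_sum, hℓ k hk.1 hk.2]
  refine congrArg _ (sum_congr rfl fun i hi => ?_)
  rw [mem_Ico] at hi
  rw [habove (i + 1) (by omega) (by omega) k hk.1]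

theorem prF_eq_of_prF_eq_of_le_choose {μ ν : Finset M → ℝ}
    (h : ∀ ℓ ≤ Fintype.card M, ∀ k, 1 ≤ k → k ≤ (Fintype.card M).choose ℓ →
      prF μ ℓ k = prF ν ℓ k)
    {ℓ : ℕ} (hℓ : ℓ ≤ Fintype.card M) {k : ℕ} (hk : 1 ≤ k) : prF μ ℓ k = prF ν ℓ k := by
  have habove : ∀ j, ℓ < j → j ≤ Fintype.card M → ∀ k, 1 ≤ k → prF μ j k = prF ν j k :=
    fun j _ hj k hk => prF_eq_of_prF_eq_of_le_choose h hj hk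
  obtain ⟨σ, hσ⟩ := exists_equiv_filterMass_eq_of_prF_eq_ge (h ℓ hℓ) habove
  have hpow : ∑ X : {X : Finset M // X.card = ℓ}, filterMass μ X.1 ^ k =
      ∑ X : {X : Finset M // X.card = ℓ}, filterMass ν X.1 ^ k := by
    rw [← σ.sum_comp (fun X => filterMass ν X.1 ^ k)]
    simp only [hσ]
  have hsum :
      ∑ i ∈ Ico ℓ (Fintype.card M), ((i + 1).choose ℓ - i.choose ℓ : ℝ) * prF μ (i + 1) k =
        ∑ i ∈ Ico ℓ (Fintype.card M), ((i + 1).choose ℓ - i.choose ℓ : ℝ) * prF ν (i + 1) k := by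
    refine sum_congr rfl fun i hi => ?_
    rw [mem_Ico] at hi
    rw [habove (i + 1) (by omega) (by omega) k hk]
  rw [sum_filterMass_pow, sum_filterMass_pow, sum_choose_mul_prod_eq_prF_add_sum,
    sum_choose_mul_prod_eq_prF_add_sum, hsum] at hpow
  linarith
termination_by Fintype.card M - ℓ

theorem exists_equiv_filterMass_eq_of_prF_eq {μ ν : Finset M → ℝ}
    (h : ∀ ℓ ≤ Fintype.card M, ∀ k, 1 ≤ k → k ≤ (Fintype.card M).choose ℓ →
      prF μ ℓ k = prF ν ℓ k)
    {ℓ : ℕ} (hℓ : ℓ ≤ Fintype.card M) :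
    ∃ σ : {X : Finset M // X.card = ℓ} ≃ {X : Finset M // X.card = ℓ},
      ∀ X, filterMass ν (σ X).1 = filterMass μ X.1 :=
  exists_equiv_filterMass_eq_of_prF_eq_ge (h ℓ hℓ) fun _ _ hj _ hk =>
    prF_eq_of_prF_eq_of_le_choose h hj hk

theorem continuous_prF (ℓ k : ℕ) : Continuous fun ρ : Finset M → ℝ => prF ρ ℓ k :=
  continuous_finsetSum _ fun _ _ =>
    continuous_if_const _ (fun _ => by fun_prop) fun _ => continuous_const

theorem continuous_filterMass (X : Finset M) :
    Continuous fun ρ : Finset M → ℝ => filterMass ρ X :=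
  continuous_finsetSum _ fun Y _ => continuous_apply Y

theorem isOpen_setOf_forall_exists_equiv_abs_filterMass_sub_lt (μ : Finset M → ℝ) (m : ℕ)
    (ε : ℝ) :
    IsOpen {ρ : Finset M → ℝ | ∀ ℓ ≤ m,
      ∃ σ : {X : Finset M // X.card = ℓ} ≃ {X : Finset M // X.card = ℓ},
        ∀ X, |filterMass μ X.1 - filterMass ρ (σ X).1| < ε} := by
  simp only [Set.ofPred_forall, Set.ofPred_exists]
  refine (Set.finite_Iic m).isOpen_biInter fun ℓ _ => isOpen_iUnion fun σ =>
    isOpen_iInter_of_finite fun X => ?_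
  exact isOpen_lt (continuous_const.sub (continuous_filterMass _)).abs continuous_const

end

theorem prF_determines_filter_masses_continuously_general
    {M : Type} [Fintype M] [DecidableEq M] (m : ℕ) (hm : Fintype.card M = m)
    (μ : Finset M → ℝ)
    (ε : ℝ) (hε : 0 < ε) :
    ∃ δ > (0 : ℝ), ∀ μ' : Finset M → ℝ,
      (∀ X, 0 ≤ μ' X) → (∑ X : Finset M, μ' X = 1) →
      (∀ ℓ ≤ m, ∀ k, 1 ≤ k → k ≤ m.choose ℓ → |prF μ ℓ k - prF μ' ℓ k| < δ) →
      ∀ ℓ ≤ m, ∃ σ : {X : Finset M // X.card = ℓ} ≃ {X : Finset M // X.card = ℓ},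
        ∀ X : {X : Finset M // X.card = ℓ},
          |filterMass μ X.1 - filterMass μ' (σ X).1| < ε := by
  subst hm
  let S : Set (ℕ × ℕ) :=
    {p | p.1 ≤ Fintype.card M ∧ 1 ≤ p.2 ∧ p.2 ≤ (Fintype.card M).choose p.1}
  have hS : S.Finite := ((Set.finite_Iic _).prod (Set.finite_Iic (2 ^ Fintype.card M))).subset
    fun p hp => ⟨hp.1, hp.2.2.trans (Nat.choose_le_two_pow _ _)⟩
  obtain ⟨δ, hδ, hclose⟩ :=
    (isCompact_stdSimplex ℝ (Finset M)).exists_pos_forall_mem_of_abs_sub_lt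
      (isOpen_setOf_forall_exists_equiv_abs_filterMass_sub_lt μ _ ε) hS
      (F := fun p ρ => prF ρ p.1 p.2) (fun p => continuous_prF p.1 p.2) μ fun ρ _ hρ ℓ hℓ => by
        obtain ⟨σ, hσ⟩ := exists_equiv_filterMass_eq_of_prF_eq
          (fun ℓ hℓ k hk₁ hk₂ => hρ (ℓ, k) ⟨hℓ, hk₁, hk₂⟩) hℓ
        exact ⟨σ, fun X => by rwa [hσ, sub_self, abs_zero]⟩
  exact ⟨δ, hδ, fun μ' h₀ h₁ hprF =>
    hclose μ' ⟨h₀, h₁⟩ fun p hp => hprF p.1 hp.1 p.2 hp.2.1 hp.2.2⟩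

/-- continuity in Lemma about finite boolean lattices. The multisets
`A_ℓ = {μ(X^↑) : |X| = ℓ}` depend continuously on the probabilities `Pr[F_ℓ^k]`. -/
theorem prF_determines_filter_masses_continuously
    {M : Type} [Fintype M] [DecidableEq M] (m : ℕ) (hm : Fintype.card M = m)
    (μ : Finset M → ℝ) (hμ0 : ∀ X, 0 ≤ μ X) (hμ1 : ∑ X : Finset M, μ X = 1)
    (ε : ℝ) (hε : 0 < ε) :
    ∃ δ > (0 : ℝ), ∀ μ' : Finset M → ℝ,
      (∀ X, 0 ≤ μ' X) → (∑ X : Finset M, μ' X = 1) →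
      (∀ ℓ ≤ m, ∀ k, 1 ≤ k → k ≤ m.choose ℓ → |prF μ ℓ k - prF μ' ℓ k| < δ) →
      ∀ ℓ ≤ m, ∃ σ : {X : Finset M // X.card = ℓ} ≃ {X : Finset M // X.card = ℓ},
        ∀ X : {X : Finset M // X.card = ℓ},
          |filterMass μ X.1 - filterMass μ' (σ X).1| < ε :=
  prF_determines_filter_masses_continuously_general m hm μ ε hε
end
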